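/- arXiv:2109.09308 — 2 statements merged into one kernel-verified Lean document; each statement's English description precedes it below -/
import Mathlib

section
/- Let $\Omega \subset \mathbb{R}^n$ be a bounded open set satisfying a uniform exterior ball condition: there is $r_0 > 0$ such that for every $x \in \Omega$ there is a ball $B_{r_0}(z) \subset \Omega^c$ with $\mathrm{dist}(x, B_{r_0}(z)) = \delta(x)$, where $\delta(x) = \mathrm{dist}(x, \partial\Omega)$. Then for every $s \in (0,1)$ there exist constants $0 < C_1 \le C_2$ depending only on $n$, $s$, $r_0$, and $\mathrm{diam}(\Omega)$ such that $C_1\, \delta(x)^{-2s} \le \int_{\Omega^c} \frac{1}{|x-y|^{n+2s}}\, \mathrm{d}y \le C_2\, \delta(x)^{-2s}$ for all $x \in \Omega$. -/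
/-! The complement of `Ω` lies outside the ball `B(x, δ(x))`, and by translation and scaling the
integral of `|y - x|^{-n-2s}` outside that ball is `δ(x)^{-2s}` times the integral outside the unit
ball, which is finite because `n + 2s > n`. Conversely, the exterior ball touching `x` at distance
`δ(x)` contains a ball of radius `min(δ(x), r₀) ≥ δ(x) r₀ / max(diam Ω, r₀)` whose points all lie
within `3δ(x)` of `x`, and there the integrand is at least `(3δ(x))^{-n-2s}`. -/

open MeasureTheory Metric Module Pointwise

section MetricFacts

variable {X : Type*} [PseudoMetricSpace X]

lemma subset_compl_ball_infDist (s : Set X) (x : X) : s ⊆ (ball x (infDist x s))ᶜ :=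
  fun y hy hyx ↦ (infDist_le_dist_of_mem hy).not_gt (by rwa [mem_ball, dist_comm] at hyx)

lemma dist_le_infDist_closedBall_add (x z : X) {r : ℝ} (hr : 0 ≤ r) :
    dist x z ≤ infDist x (closedBall z r) + r := by
  rw [← sub_le_iff_le_add, le_infDist ⟨z, mem_closedBall_self hr⟩]
  intro y hy
  linarith [dist_triangle x y z, mem_closedBall.1 hy]

lemma infDist_frontier_le_diam {Ω : Set X} (hbdd : Bornology.IsBounded Ω) {x : X} (hx : x ∈ Ω) :
    infDist x (frontier Ω) ≤ diam Ω := by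
  rcases (frontier Ω).eq_empty_or_nonempty with hempty | ⟨y, hy⟩
  · rw [hempty, infDist_empty]
    exact diam_nonneg
  · rw [← diam_closure]
    exact (infDist_le_dist_of_mem hy).trans
      (dist_le_diam_of_mem hbdd.closure (subset_closure hx) (frontier_subset_closure hy))

lemma IsOpen.infDist_compl_pos {Ω : Set X} (hΩ : IsOpen Ω) {x : X} (hx : x ∈ Ω)
    (hne : Ωᶜ.Nonempty) : 0 < infDist x Ωᶜ :=
  (hΩ.isClosed_compl.notMem_iff_infDist_pos hne).1 (not_not.2 hx)

end MetricFacts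

section TailIntegral

variable {E : Type*} [NormedAddCommGroup E] [NormedSpace ℝ E] [FiniteDimensional ℝ E]
  [MeasurableSpace E] [BorelSpace E] (μ : Measure E) [μ.IsAddHaarMeasure]

lemma rpow_neg_le_mul_one_add_rpow_neg {p δ t : ℝ} (hp : 0 ≤ p) (hδ : 0 < δ) (ht : δ ≤ t) :
    t ^ (-p) ≤ (1 + δ⁻¹) ^ p * (1 + t) ^ (-p) := by
  have ht0 : 0 < t := hδ.trans_le ht
  have hc : 0 < 1 + δ⁻¹ := by positivity
  have hle : 1 + t ≤ (1 + δ⁻¹) * t := by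
    rw [add_mul, one_mul, inv_mul_eq_div, add_comm]
    gcongr
    exact (one_le_div hδ).2 ht
  calc t ^ (-p) = (1 + δ⁻¹) ^ p * ((1 + δ⁻¹) * t) ^ (-p) := by
        rw [Real.mul_rpow hc.le ht0.le, ← mul_assoc, ← Real.rpow_add hc, add_neg_cancel,
          Real.rpow_zero, one_mul]
    _ ≤ (1 + δ⁻¹) ^ p * (1 + t) ^ (-p) := mul_le_mul_of_nonneg_left
        (Real.rpow_le_rpow_of_nonpos (by positivity) hle (neg_nonpos.2 hp)) (by positivity)

lemma integrableOn_compl_ball_rpow_neg_norm_sub {p δ : ℝ} (hp : (finrank ℝ E : ℝ) < p) (x : E)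
    (hδ : 0 < δ) : IntegrableOn (fun y ↦ ‖y - x‖ ^ (-p)) (ball x δ)ᶜ μ := by
  have hp0 : 0 ≤ p := (Nat.cast_nonneg _).trans hp.le
  refine Integrable.mono' ((((integrable_one_add_norm hp).comp_sub_right x).const_mul
    ((1 + δ⁻¹) ^ p)).integrableOn) (Measurable.aestronglyMeasurable (by fun_prop)) ?_
  rw [ae_restrict_iff' measurableSet_ball.compl]
  refine ae_of_all _ fun y hy ↦ ?_
  rw [Real.norm_of_nonneg (by positivity)]
  refine rpow_neg_le_mul_one_add_rpow_neg hp0 hδ ?_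
  simpa [dist_eq_norm] using hy

lemma setIntegral_compl_ball_rpow_neg_norm_sub (p : ℝ) (x : E) {δ : ℝ} (hδ : 0 < δ) :
    ∫ y in (ball x δ)ᶜ, ‖y - x‖ ^ (-p) ∂μ
      = δ ^ ((finrank ℝ E : ℝ) - p) * ∫ y in (ball (0 : E) 1)ᶜ, ‖y‖ ^ (-p) ∂μ := by
  have htranslate : ∫ y in (ball x δ)ᶜ, ‖y - x‖ ^ (-p) ∂μ = ∫ y in (ball 0 δ)ᶜ, ‖y‖ ^ (-p) ∂μ := by
    rw [← (measurePreserving_add_right μ x).setIntegral_preimage_emb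
      (measurableEmbedding_addRight x), Set.preimage_compl, preimage_add_right_ball, sub_self]
    simp only [add_sub_cancel_right]
  have hdilate : δ • (ball (0 : E) 1)ᶜ = (ball 0 δ)ᶜ := by
    rw [← smul_unitBall_of_pos hδ]
    exact Set.image_compl_eq (MulAction.bijective₀ hδ.ne')
  have hscale := Measure.setIntegral_comp_smul_of_pos μ (fun y : E ↦ ‖y‖ ^ (-p)) (ball 0 1)ᶜ hδ
  simp only [norm_smul, Real.norm_of_nonneg hδ.le, Real.mul_rpow hδ.le (norm_nonneg _),
    integral_const_mul, hdilate, smul_eq_mul] at hscale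
  rw [eq_inv_mul_iff_mul_eq₀ (by positivity)] at hscale
  rw [htranslate, ← hscale, sub_eq_add_neg, Real.rpow_add hδ, Real.rpow_natCast, mul_assoc]

lemma measureReal_mul_rpow_neg_le_setIntegral {p δ R : ℝ} {s t : Set E} {x : E}
    (hp : (finrank ℝ E : ℝ) < p) (hδ : 0 < δ) (hs : s ⊆ (ball x δ)ᶜ) (ht : MeasurableSet t)
    (hts : t ⊆ s) (hR : ∀ y ∈ t, ‖y - x‖ ≤ R) :
    μ.real t * R ^ (-p) ≤ ∫ y in s, ‖y - x‖ ^ (-p) ∂μ := by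
  have hint : IntegrableOn (fun y ↦ ‖y - x‖ ^ (-p)) s μ :=
    (integrableOn_compl_ball_rpow_neg_norm_sub μ hp x hδ).mono_set hs
  have htR : t ⊆ closedBall x R := fun y hy ↦ by simpa [dist_eq_norm] using hR y hy
  calc μ.real t * R ^ (-p) = ∫ _ in t, R ^ (-p) ∂μ := by rw [setIntegral_const, smul_eq_mul]
    _ ≤ ∫ y in t, ‖y - x‖ ^ (-p) ∂μ := by
        refine setIntegral_mono_on (integrableOn_const
          ((measure_mono htR).trans_lt measure_closedBall_lt_top).ne) (hint.mono_set hts) ht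
          fun y hy ↦ Real.rpow_le_rpow_of_nonpos ?_ (hR y hy) (by linarith)
        have hyx := hs (hts hy)
        rw [Set.mem_compl_iff, mem_ball, dist_eq_norm, not_lt] at hyx
        exact hδ.trans_le hyx
    _ ≤ ∫ y in s, ‖y - x‖ ^ (-p) ∂μ :=
        setIntegral_mono_set hint (ae_of_all _ fun _ ↦ by positivity) hts.eventuallyLE

end TailIntegral

section ExteriorBall

variable {F : Type*} [NormedAddCommGroup F] [NormedSpace ℝ F]

lemma exists_closedBall_subset_closedBall_dist_le {x z : F} {r ρ : ℝ} (hρ : 0 ≤ ρ)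
    (hρr : ρ ≤ r) (hx : x ∉ closedBall z r) :
    ∃ w, closedBall w ρ ⊆ closedBall z r ∧ dist x w ≤ infDist x (closedBall z r) + ρ := by
  have hxz : r < dist z x := by rw [dist_comm]; exact not_le.1 hx
  have hd : 0 < dist z x := by linarith
  set t := (r - ρ) / dist z x
  have ht0 : 0 ≤ t := div_nonneg (by linarith) hd.le
  have ht1 : t ≤ 1 := (div_le_one hd).2 (by linarith)
  refine ⟨AffineMap.lineMap z x t, closedBall_subset_closedBall' ?_, ?_⟩
  · rw [dist_lineMap_left, Real.norm_of_nonneg ht0, div_mul_cancel₀ _ hd.ne']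
    linarith
  · rw [dist_comm, dist_lineMap_right, Real.norm_of_nonneg (by linarith), sub_mul,
      div_mul_cancel₀ _ hd.ne']
    linarith [dist_le_infDist_closedBall_add x z (hρ.trans hρr), dist_comm x z]

lemma IsOpen.infDist_frontier_eq_infDist_compl [FiniteDimensional ℝ F] {Ω : Set F}
    (hΩ : IsOpen Ω) {x : F} (hx : x ∈ Ω) (hne : Ωᶜ.Nonempty) :
    infDist x (frontier Ω) = infDist x Ωᶜ := by
  obtain ⟨y, hy, hxy⟩ := exists_mem_frontier_infDist_compl_eq_dist hx (Set.nonempty_compl.1 hne)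
  have hfrontier : frontier Ω ⊆ Ωᶜ := hΩ.frontier_eq ▸ Set.sdiff_subset_compl _ _
  exact le_antisymm (hxy ▸ infDist_le_dist_of_mem hy)
    (infDist_le_infDist_of_subset hfrontier ⟨y, hy⟩)

end ExteriorBall

section Domain

variable {E : Type*} [NormedAddCommGroup E] [NormedSpace ℝ E] [FiniteDimensional ℝ E]
  [MeasurableSpace E] [BorelSpace E] (μ : Measure E) [μ.IsAddHaarMeasure]
  {Ω : Set E} {x : E} {p : ℝ}

theorem setIntegral_compl_rpow_neg_norm_sub_le (hΩ : IsOpen Ω) (hp : (finrank ℝ E : ℝ) < p)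
    (hx : x ∈ Ω) (hne : Ωᶜ.Nonempty) :
    ∫ y in Ωᶜ, ‖y - x‖ ^ (-p) ∂μ
      ≤ infDist x (frontier Ω) ^ ((finrank ℝ E : ℝ) - p)
        * ∫ y in (ball (0 : E) 1)ᶜ, ‖y‖ ^ (-p) ∂μ := by
  have hδ := hΩ.infDist_compl_pos hx hne
  rw [hΩ.infDist_frontier_eq_infDist_compl hx hne,
    ← setIntegral_compl_ball_rpow_neg_norm_sub μ p x hδ]
  exact setIntegral_mono_set (integrableOn_compl_ball_rpow_neg_norm_sub μ hp x hδ)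
    (ae_of_all _ fun _ ↦ by positivity) (subset_compl_ball_infDist _ x).eventuallyLE

theorem le_setIntegral_compl_rpow_neg_norm_sub {z : E} {r : ℝ} (hΩ : IsOpen Ω)
    (hbdd : Bornology.IsBounded Ω) (hp : (finrank ℝ E : ℝ) < p) (hr : 0 < r) (hx : x ∈ Ω)
    (hz : closedBall z r ⊆ Ωᶜ) (hxz : infDist x (closedBall z r) = infDist x (frontier Ω)) :
    μ.real (ball (0 : E) 1) * (r / max (diam Ω) r) ^ finrank ℝ E * 3 ^ (-p)
        * infDist x (frontier Ω) ^ ((finrank ℝ E : ℝ) - p)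
      ≤ ∫ y in Ωᶜ, ‖y - x‖ ^ (-p) ∂μ := by
  have hne : Ωᶜ.Nonempty := ⟨z, hz (mem_closedBall_self hr.le)⟩
  have hδΩ := hΩ.infDist_frontier_eq_infDist_compl hx hne
  set δ := infDist x (frontier Ω)
  have hδ : 0 < δ := hδΩ ▸ hΩ.infDist_compl_pos hx hne
  set D := max (diam Ω) r
  have hD : 0 < D := hr.trans_le (le_max_right _ _)
  set ρ := min δ r
  obtain ⟨w, hwz, hxw⟩ := exists_closedBall_subset_closedBall_dist_le (le_min hδ.le hr.le)
    (min_le_right δ r) fun h ↦ hz h hx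
  rw [hxz] at hxw
  have hρ : δ * (r / D) ≤ ρ := by
    refine le_min (mul_le_of_le_one_right hδ.le ((div_le_one hD).2 (le_max_right _ _))) ?_
    calc δ * (r / D) ≤ D * (r / D) := by
          gcongr
          exact (infDist_frontier_le_diam hbdd hx).trans (le_max_left _ _)
      _ = r := by field_simp
  have hwx : ∀ y ∈ closedBall w ρ, ‖y - x‖ ≤ 3 * δ := fun y hy ↦ by
    rw [← dist_eq_norm]
    linarith [dist_triangle y w x, mem_closedBall.1 hy, dist_comm x w, min_le_left δ r]
  calc _ = μ.real (ball (0 : E) 1) * (δ * (r / D)) ^ finrank ℝ E * (3 * δ) ^ (-p) := by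
        rw [sub_eq_add_neg, Real.rpow_add hδ, Real.rpow_natCast, mul_pow,
          Real.mul_rpow (by norm_num) hδ.le]
        ring
    _ ≤ μ.real (ball (0 : E) 1) * ρ ^ finrank ℝ E * (3 * δ) ^ (-p) := by gcongr
    _ = μ.real (closedBall w ρ) * (3 * δ) ^ (-p) := by
        rw [Measure.addHaar_real_closedBall μ w (by positivity)]
        ring
    _ ≤ ∫ y in Ωᶜ, ‖y - x‖ ^ (-p) ∂μ :=
        measureReal_mul_rpow_neg_le_setIntegral μ hp (hΩ.infDist_compl_pos hx hne)
          (subset_compl_ball_infDist _ x) measurableSet_closedBall (hwz.trans hz) hwx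

end Domain

/-- Two-sided bound `C₁ δ(x)^{-2s} ≤ ∫_{Ωᶜ} |x-y|^{-n-2s} dy ≤ C₂ δ(x)^{-2s}` on a
bounded open set with a uniform exterior ball condition. -/
theorem stmt9 {n : ℕ} (Ω : Set (EuclideanSpace ℝ (Fin n)))
    (hopen : IsOpen Ω) (hbdd : Bornology.IsBounded Ω)
    (r0 : ℝ) (hr0 : 0 < r0)
    (hext : ∀ x ∈ Ω, ∃ z, closedBall z r0 ⊆ Ωᶜ ∧
      infDist x (closedBall z r0) = infDist x (frontier Ω))
    (s : ℝ) (hs : s ∈ Set.Ioo (0:ℝ) 1) :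
    ∃ C1 C2 : ℝ, 0 < C1 ∧ C1 ≤ C2 ∧ ∀ x ∈ Ω,
      C1 * infDist x (frontier Ω) ^ (-(2*s))
        ≤ ∫ y in Ωᶜ, 1 / dist x y ^ ((n:ℝ) + 2*s) ∧
      ∫ y in Ωᶜ, 1 / dist x y ^ ((n:ℝ) + 2*s)
        ≤ C2 * infDist x (frontier Ω) ^ (-(2*s)) := by
  set p : ℝ := n + 2 * s
  have hp : (finrank ℝ (EuclideanSpace ℝ (Fin n)) : ℝ) < p := by
    rw [finrank_euclideanSpace_fin]; linarith [hs.1]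
  have hexp : (finrank ℝ (EuclideanSpace ℝ (Fin n)) : ℝ) - p = -(2 * s) := by
    rw [finrank_euclideanSpace_fin]; ring
  have hintegrand (x : EuclideanSpace ℝ (Fin n)) :
      (fun y ↦ 1 / dist x y ^ p) = fun y ↦ ‖y - x‖ ^ (-p) := by
    ext y
    rw [dist_comm, dist_eq_norm, Real.rpow_neg (norm_nonneg _), one_div]
  set C1 := volume.real (ball (0 : EuclideanSpace ℝ (Fin n)) 1)
    * (r0 / max (diam Ω) r0) ^ finrank ℝ (EuclideanSpace ℝ (Fin n)) * 3 ^ (-p)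
  have hC1 : 0 < C1 := by
    have hV : 0 < volume.real (ball (0 : EuclideanSpace ℝ (Fin n)) 1) :=
      ENNReal.toReal_pos (measure_ball_pos volume 0 one_pos).ne' measure_ball_lt_top.ne
    have hD : 0 < max (diam Ω) r0 := hr0.trans_le (le_max_right _ _)
    positivity
  set I := ∫ y in (ball (0 : EuclideanSpace ℝ (Fin n)) 1)ᶜ, ‖y‖ ^ (-p)
  refine ⟨C1, max I C1, hC1, le_max_right _ _, fun x hx ↦ ?_⟩
  obtain ⟨z, hz, hxz⟩ := hext x hx
  rw [hintegrand x, ← hexp]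
  constructor
  · exact le_setIntegral_compl_rpow_neg_norm_sub volume hopen hbdd hp hr0 hx hz hxz
  · rw [mul_comm]
    exact (setIntegral_compl_rpow_neg_norm_sub_le volume hopen hp hx
      ⟨z, hz (mem_closedBall_self hr0.le)⟩).trans
      (mul_le_mul_of_nonneg_left (le_max_left I C1) (Real.rpow_nonneg infDist_nonneg _))
end

section
/- (Discrete comparison principle from strict monotone dominance.) Let $V$ be a finite index set and $L : \mathbb{R}^V \to \mathbb{R}^V$ be an operator with the monotonicity property: whenever $u - v$ attains a nonnegative maximum at index $i$, then $(Lu)_i \ge (Lv)_i$. Suppose additionally there exists $b \in \mathbb{R}^V$ and $c_0 > 0$ such that $(L(u + \varepsilon b))_i \ge (Lu)_i + \varepsilon c_0$ for all $u$, $\varepsilon > 0$, and $i$ (discrete barrier). If $v, w \in \mathbb{R}^V$ satisfy $(Lv)_i \ge (Lw)_i$ for all $i$, then $v_i \ge w_i$ for all $i$. -/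
/-- Abstract discrete comparison principle from monotonicity and a discrete barrier. -/
theorem stmt11 {V : Type*} [Fintype V]
    (L : (V → ℝ) → (V → ℝ))
    (hMono : ∀ u v : V → ℝ, ∀ i, 0 ≤ u i - v i → (∀ j, u j - v j ≤ u i - v i) →
      L v i ≤ L u i)
    (b : V → ℝ) (c0 : ℝ) (hc0 : 0 < c0)
    (hBar : ∀ (u : V → ℝ) (ε : ℝ), 0 < ε → ∀ i, L u i + ε * c0 ≤ L (u + ε • b) i)
    (v w : V → ℝ) (h : ∀ i, L w i ≤ L v i) :
    ∀ i, w i ≤ v i := by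
  intro i₀
  have hne : Nonempty V := ⟨i₀⟩
  -- Step 1: for every ε > 0, w j ≤ (v + ε • b) j for all j
  have key : ∀ ε : ℝ, 0 < ε → ∀ j, w j ≤ (v + ε • b) j := by
    intro ε hε
    set u := v + ε • b with hu
    by_contra hcon
    push_neg at hcon
    obtain ⟨j₀, hj₀⟩ := hcon
    -- take maximizer of w - u
    obtain ⟨i, _, hi⟩ := Finset.exists_max_image (Finset.univ : Finset V)
      (fun j => w j - u j) ⟨j₀, Finset.mem_univ j₀⟩
    have hpos : 0 ≤ w i - u i := by
      have := hi j₀ (Finset.mem_univ j₀)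
      linarith
    have hmax : ∀ j, w j - u j ≤ w i - u i := fun j => hi j (Finset.mem_univ j)
    have h1 : L u i ≤ L w i := hMono w u i hpos hmax
    have h2 : L v i + ε * c0 ≤ L u i := hBar v ε hε i
    have h3 : L w i ≤ L v i := h i
    nlinarith
  -- Step 2: limit ε → 0
  rcases le_or_gt (b i₀) 0 with hb | hb
  · have := key 1 one_pos i₀
    simp only [Pi.add_apply, Pi.smul_apply, smul_eq_mul, one_mul] at this
    linarith
  · refine le_of_forall_pos_le_add fun δ hδ => ?_
    have := key (δ / b i₀) (div_pos hδ hb) i₀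
    simp only [Pi.add_apply, Pi.smul_apply, smul_eq_mul] at this
    rw [div_mul_cancel₀ _ (ne_of_gt hb)] at this
    exact this
end
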